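/- For any 3×3 matrices A and B, the derivative at ε = 0 of ε ↦ e^{A+εB} equals ∫_0^1 e^{(1-ξ)A} B e^{ξA} dξ. -/

import Mathlib

open Matrix intervalIntegral

attribute [local instance] Matrix.linftyOpNormedAddCommGroup Matrix.linftyOpNormedRing
  Matrix.linftyOpNormedAlgebra

/-!
Duhamel's formula: `ξ ↦ e^{(1-ξ)A} e^{ξN}` has derivative `e^{(1-ξ)A} (N - A) e^{ξN}`, so
integrating over `[0, 1]` gives `e^N - e^A = ∫₀¹ e^{(1-ξ)A} (N - A) e^{ξN} dξ`. With `N = A + εB`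
the right-hand side is `ε • g ε` for an integral `g ε` depending continuously on `ε`, and `g 0` is
the claimed derivative.
-/

theorem hasDerivAt_of_sub_eq_smul {E : Type*} [NormedAddCommGroup E] [NormedSpace ℝ E]
    {f g : ℝ → E} {x : ℝ} (hfg : ∀ y, f y - f x = (y - x) • g y) (hg : ContinuousAt g x) :
    HasDerivAt f (g x) x := by
  refine hasDerivAt_iff_tendsto_slope.2 <| (hg.tendsto.mono_left nhdsWithin_le_nhds).congr' ?_
  filter_upwards [self_mem_nhdsWithin] with y (hy : y ≠ x)
  rw [slope_def_module, hfg, smul_smul, inv_mul_cancel₀ (sub_ne_zero.2 hy), one_smul]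

open NormedSpace

variable {𝔸 : Type*} [NormedRing 𝔸] [NormedAlgebra ℝ 𝔸] [CompleteSpace 𝔸]

@[fun_prop]
theorem continuous_exp_of_normedAlgebra_real : Continuous (exp : 𝔸 → 𝔸) :=
  continuous_iff_continuousAt.2 fun x => (exp_analytic (𝕂 := ℝ) x).continuousAt

theorem hasDerivAt_exp_one_sub_smul_mul_exp_smul (A N : 𝔸) (ξ : ℝ) :
    HasDerivAt (fun ξ : ℝ => exp ((1 - ξ) • A) * exp (ξ • N))
      (exp ((1 - ξ) • A) * (N - A) * exp (ξ • N)) ξ := by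
  have hA : HasDerivAt (fun ξ : ℝ => exp ((1 - ξ) • A)) ((-1 : ℝ) • (exp ((1 - ξ) • A) * A)) ξ :=
    (hasDerivAt_exp_smul_const A (1 - ξ)).scomp ξ ((hasDerivAt_id ξ).const_sub 1)
  refine (hA.mul (hasDerivAt_exp_smul_const' N ξ)).congr_deriv ?_
  simp only [neg_smul, one_smul, neg_mul, mul_sub, sub_mul, mul_assoc]
  abel

theorem exp_sub_exp_eq_integral (A N : 𝔸) :
    exp N - exp A = ∫ ξ in (0:ℝ)..1, exp ((1 - ξ) • A) * (N - A) * exp (ξ • N) := by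
  have hcont : Continuous fun ξ : ℝ => exp ((1 - ξ) • A) * (N - A) * exp (ξ • N) := by
    fun_prop
  rw [integral_eq_sub_of_hasDerivAt (fun ξ _ => hasDerivAt_exp_one_sub_smul_mul_exp_smul A N ξ)
    (hcont.intervalIntegrable 0 1)]
  simp

theorem hasDerivAt_exp_add_smul (A B : 𝔸) :
    HasDerivAt (fun ε : ℝ => exp (A + ε • B))
      (∫ ξ in (0:ℝ)..1, exp ((1 - ξ) • A) * B * exp (ξ • A)) 0 := by
  set g : ℝ → 𝔸 := fun ε => ∫ ξ in (0:ℝ)..1, exp ((1 - ξ) • A) * B * exp (ξ • (A + ε • B))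
  have hsub : ∀ ε : ℝ, exp (A + ε • B) - exp (A + (0:ℝ) • B) = (ε - 0) • g ε := by
    intro ε
    rw [zero_smul, add_zero, sub_zero, exp_sub_exp_eq_integral A (A + ε • B),
      add_sub_cancel_left, ← integral_smul]
    simp only [mul_smul_comm, smul_mul_assoc]
  have hg : Continuous g :=
    continuous_parametric_intervalIntegral_of_continuous' (by fun_prop) 0 1
  simpa only [g, zero_smul, add_zero] using hasDerivAt_of_sub_eq_smul hsub hg.continuousAt

/-- The derivative at `ε = 0` of `ε ↦ e^{A+εB}` equals `∫_0^1 e^{(1-ξ)A} B e^{ξA} dξ`. -/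
theorem stmt2 (A B : Matrix (Fin 3) (Fin 3) ℝ) :
    HasDerivAt (fun ε : ℝ => NormedSpace.exp (A + ε • B))
      (∫ ξ in (0:ℝ)..1,
        NormedSpace.exp ((1 - ξ) • A) * B * NormedSpace.exp (ξ • A)) 0 :=
  hasDerivAt_exp_add_smul A B
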